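/- The limit h(ζ) = lim_{n→∞} (∑_{j=0}^{n-1} 1/(ζ+j) − log((ζ+n)/ζ)) satisfies: there exists C > 0 such that |h(ζ)| ≤ C/|ζ| for all ζ with Re ζ > 0. -/

import Mathlib

open Filter Complex Real

/-!
With `w_j = (ζ + j)⁻¹`, all of `ζ + j` and `1 + w_j` lie in the right half plane, where `log` is
additive, so `log ((ζ + n) / ζ) = ∑_{j<n} log (1 + w_j)` and the partial sum becomes
`∑_{j<n} (w_j - log (1 + w_j))`. For `Re w ≥ 0` one has `‖w - log (1 + w)‖ ≪ ‖w‖² / (1 + ‖w‖)`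
(Taylor near `0`, a crude linear bound away from it), and `2 ‖ζ + j‖ ≥ ‖ζ‖ + j`, so the `j`-th term
is `≪ 1 / ((‖ζ‖ + j) (‖ζ‖ + j + 1))`; these telescope to `≪ 1 / ‖ζ‖` uniformly in `n`.
-/

namespace Complex

lemma log_div_of_re_pos {a b : ℂ} (ha : 0 < a.re) (hb : 0 < b.re) :
    log (a / b) = log a - log b := by
  have ha₀ : a ≠ 0 := fun h ↦ by simp [h] at ha
  have hb₀ : b ≠ 0 := fun h ↦ by simp [h] at hb
  have harg_a : |arg a| < π / 2 := abs_arg_lt_pi_div_two_iff.mpr (Or.inl ha)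
  have harg_b : |arg b| < π / 2 := abs_arg_lt_pi_div_two_iff.mpr (Or.inl hb)
  have hb_ne_pi : arg b ≠ π := by
    intro h; rw [h, abs_of_pos pi_pos] at harg_b; linarith [pi_pos]
  rw [div_eq_mul_inv, log_mul ha₀ (inv_ne_zero hb₀), log_inv b hb_ne_pi, sub_eq_add_neg]
  rw [arg_inv, if_neg hb_ne_pi]
  constructor <;> linarith [abs_lt.mp harg_a, abs_lt.mp harg_b]

lemma log_add_natCast_div_eq_sum {ζ : ℂ} (hζ : 0 < ζ.re) (n : ℕ) :
    log ((ζ + n) / ζ) = ∑ j ∈ Finset.range n, log (1 + (ζ + j)⁻¹) := by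
  have hre (x : ℕ) : 0 < (ζ + x).re := by simp only [add_re, natCast_re]; positivity
  have hstep (j : ℕ) : log (1 + (ζ + j)⁻¹) = log (ζ + ↑(j + 1)) - log (ζ + j) := by
    have hj : ζ + j ≠ 0 := fun h ↦ by simpa [h] using hre j
    rw [← log_div_of_re_pos (hre _) (hre j)]
    congr 1
    field_simp
    push_cast
    ring
  rw [Finset.sum_congr rfl fun j _ ↦ hstep j, Finset.sum_range_sub (fun j ↦ log (ζ + j)),
    log_div_of_re_pos (hre n) hζ, Nat.cast_zero, add_zero]

lemma norm_log_one_add_le_of_re_nonneg {w : ℂ} (hw : 0 ≤ w.re) :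
    ‖log (1 + w)‖ ≤ ‖w‖ + π / 2 := by
  have hre : 1 ≤ (1 + w).re := by simpa using hw
  have hnorm : 1 ≤ ‖1 + w‖ := hre.trans (re_le_norm _)
  have harg : |arg (1 + w)| ≤ π / 2 := abs_arg_le_pi_div_two_iff.mpr (by linarith)
  have hlog : Real.log ‖1 + w‖ ≤ ‖w‖ := by
    linarith [Real.log_le_sub_one_of_pos (by linarith : 0 < ‖1 + w‖), norm_add_le 1 w,
      norm_one (α := ℂ)]
  calc ‖log (1 + w)‖ ≤ |(log (1 + w)).re| + |(log (1 + w)).im| := norm_le_abs_re_add_abs_im _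
    _ ≤ ‖w‖ + π / 2 := by
      rw [log_re, log_im, abs_of_nonneg (Real.log_nonneg hnorm)]
      exact add_le_add hlog harg

lemma norm_sub_log_one_add_le_of_re_nonneg {w : ℂ} (hw : 0 ≤ w.re) :
    ‖w - log (1 + w)‖ ≤ 18 * ‖w‖ ^ 2 / (1 + ‖w‖) := by
  set x := ‖w‖
  have hx : 0 ≤ x := norm_nonneg w
  rw [le_div_iff₀ (by positivity)]
  rcases le_or_gt x (1 / 2) with hsmall | hbig
  · have hquad : ‖w - log (1 + w)‖ ≤ x ^ 2 := by
      rw [norm_sub_rev]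
      refine (norm_log_one_add_sub_self_le (by linarith)).trans ?_
      have : (1 - x)⁻¹ ≤ 2 := by rw [inv_le_comm₀ (by linarith) two_pos]; linarith
      nlinarith [sq_nonneg x]
    nlinarith [norm_nonneg (w - log (1 + w))]
  · have hlin : ‖w - log (1 + w)‖ ≤ 2 * x + 2 := by
      linarith [norm_sub_le w (log (1 + w)), norm_log_one_add_le_of_re_nonneg hw, pi_le_four]
    nlinarith [norm_nonneg (w - log (1 + w))]

lemma norm_add_ofReal_le_two_mul {ζ : ℂ} (hζ : 0 ≤ ζ.re) {x : ℝ} (hx : 0 ≤ x) :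
    ‖ζ‖ + x ≤ 2 * ‖ζ + x‖ := by
  have hx_le : x ≤ ‖ζ + x‖ := by
    simpa using (show x ≤ (ζ + x).re by simpa using hζ).trans (re_le_norm _)
  have hζ_le : ‖ζ‖ ≤ ‖ζ + x‖ := by
    rw [← sq_le_sq₀ (norm_nonneg _) (norm_nonneg _), Complex.sq_norm, Complex.sq_norm, normSq_add]
    simp only [normSq_ofReal, conj_ofReal, mul_re, ofReal_re, ofReal_im, mul_zero, sub_zero]
    nlinarith [mul_nonneg hζ hx]
  linarith

lemma norm_inv_sub_log_one_add_inv_le {ζ : ℂ} (hζ : 0 < ζ.re) (j : ℕ) :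
    ‖(ζ + j)⁻¹ - log (1 + (ζ + j)⁻¹)‖ ≤ 72 * (1 / (‖ζ‖ + j) - 1 / (‖ζ‖ + j + 1)) := by
  set a := ‖ζ‖
  set r := ‖ζ + j‖ with hr_def
  have ha : 0 < a := norm_pos_iff.mpr fun h ↦ by simp [h] at hζ
  have hr : a + j ≤ 2 * r := by
    simpa using norm_add_ofReal_le_two_mul hζ.le (Nat.cast_nonneg j)
  have hre : 0 ≤ (ζ + j)⁻¹.re := by
    rw [inv_re]; exact div_nonneg (by simp only [add_re, natCast_re]; positivity) (normSq_nonneg _)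
  have hr₀ : 0 < r := by linarith [(Nat.cast_nonneg j : (0 : ℝ) ≤ j)]
  calc ‖(ζ + j)⁻¹ - log (1 + (ζ + j)⁻¹)‖ ≤ 18 * ‖(ζ + j)⁻¹‖ ^ 2 / (1 + ‖(ζ + j)⁻¹‖) :=
        norm_sub_log_one_add_le_of_re_nonneg hre
    _ = 18 / (r * (r + 1)) := by rw [norm_inv, ← hr_def]; field_simp
    _ ≤ 72 / ((a + j) * (a + j + 1)) := by
        rw [div_le_div_iff₀ (by positivity) (by positivity)]
        nlinarith [mul_le_mul hr (by linarith : a + j + 1 ≤ 2 * r + 1) (by positivity) (by positivity)]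
    _ = 72 * (1 / (a + j) - 1 / (a + j + 1)) := by field_simp; ring

lemma norm_sum_inv_sub_log_le {ζ : ℂ} (hζ : 0 < ζ.re) (n : ℕ) :
    ‖∑ j ∈ Finset.range n, (ζ + j)⁻¹ - log ((ζ + n) / ζ)‖ ≤ 72 / ‖ζ‖ := by
  have ha : 0 < ‖ζ‖ := norm_pos_iff.mpr fun h ↦ by simp [h] at hζ
  calc ‖∑ j ∈ Finset.range n, (ζ + j)⁻¹ - log ((ζ + n) / ζ)‖
      = ‖∑ j ∈ Finset.range n, ((ζ + j)⁻¹ - log (1 + (ζ + j)⁻¹))‖ := by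
        rw [log_add_natCast_div_eq_sum hζ, Finset.sum_sub_distrib]
    _ ≤ ∑ j ∈ Finset.range n, 72 * (1 / (‖ζ‖ + j) - 1 / (‖ζ‖ + ↑(j + 1))) := by
        refine (norm_sum_le _ _).trans (Finset.sum_le_sum fun j _ ↦ ?_)
        simpa [add_assoc] using norm_inv_sub_log_one_add_inv_le hζ j
    _ = 72 / ‖ζ‖ - 72 / (‖ζ‖ + n) := by
        rw [← Finset.mul_sum, Finset.sum_range_sub' (fun j ↦ 1 / (‖ζ‖ + j))]
        simp only [Nat.cast_zero, add_zero]; ring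
    _ ≤ 72 / ‖ζ‖ := sub_le_self _ (by positivity)

end Complex

/-- The limit `h(ζ)` of the shifted-harmonic/logarithm difference satisfies
`|h(ζ)| ≤ C/|ζ|` on the right half plane, for a uniform constant `C`. -/
theorem limit_harmonic_minus_log_is_O (h : ℂ → ℂ)
    (hlim : ∀ ζ : ℂ, 0 < ζ.re → Tendsto
      (fun n : ℕ => (∑ j ∈ Finset.range n, 1 / (ζ + j)) - Complex.log ((ζ + n) / ζ))
      atTop (nhds (h ζ))) :
    ∃ C : ℝ, 0 < C ∧ ∀ ζ : ℂ, 0 < ζ.re →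
      ‖h ζ‖ ≤ C / ‖ζ‖ := by
  refine ⟨72, by norm_num, fun ζ hζ ↦ ?_⟩
  refine le_of_tendsto ((hlim ζ hζ).norm) (Eventually.of_forall fun n ↦ ?_)
  simpa only [one_div] using norm_sum_inv_sub_log_le hζ n
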